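/- Let d ≥ 1, N ≥ 1, q ∈ (1, 2), q' = q/(q−1), r = q'/2, and R > 0. Let K : ℝ^d → M_N(ℂ) be measurable, K ∈ L^r(ℝ^d, M_N(ℂ)), with K(x) = 0 for |x| > R. For z ∈ ℤ^d let C_z := z + [0, 1]^d. Then there exists a constant C > 0, depending only on ‖K‖_r, R, q, d and N, such that for all w ∈ L^q(ℝ^d, ℂ^N): |∬_{ℝ^d×ℝ^d} ⟨w(x), K(x−y) w(y)⟩_{ℂ^N} dx dy| ≤ C ( sup_{z ∈ ℤ^d} ‖w‖_{L^q(C_z)} )^{2−q} ‖w‖_q^q. -/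

import Mathlib

/-!
Pointwise `|⟨w x, K (x - y) w y⟩| ≤ |w x| |K (x - y)| |w y|`. With `α = (q - 1) / q` and
`γ = (2 - q) / q`, so that `2α + γ = 1` and `2αr = 1`, this majorant factors as
`(|w x|^q |K|^r)^α (|w y|^q |K|^r)^α (|w x|^q |w y|^q 1_{K (x - y) ≠ 0})^γ`, and Hölder on
`ℝ^d × ℝ^d` applies. By translation invariance the first two factors integrate to
`‖w‖_q^q ‖K‖_r^r`. In the third, `y` stays in the ball `B(x, R)`, which is covered by
`(2⌈R⌉ + 1)^d` unit cubes, each carrying `L^q` mass at most `(sup_z ‖w‖_{L^q(C_z)})^q`.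
-/

open MeasureTheory Matrix
open scoped ENNReal

/-- The squared Euclidean norm `|v|²_{ℂ^N}` of a vector `v ∈ ℂ^N`. -/
noncomputable def vecNormSq {N : ℕ} (v : Fin N → ℂ) : ℝ := ∑ i, ‖v i‖ ^ 2

/-- The (Frobenius) norm `|M|` of a matrix `M ∈ M_N(ℂ)`. -/
noncomputable def matNorm {N : ℕ} (M : Matrix (Fin N) (Fin N) ℂ) : ℝ :=
  (∑ i, ∑ j, ‖M i j‖ ^ 2) ^ ((1 : ℝ) / 2)

theorem lintegral_rpow_mul_rpow_mul_rpow_le {α : Type*} [MeasurableSpace α] {μ : Measure α}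
    {f g h : α → ℝ≥0∞} (hf : AEMeasurable f μ) (hg : AEMeasurable g μ) (hh : AEMeasurable h μ)
    {a b c : ℝ} (ha : 0 ≤ a) (hb : 0 ≤ b) (hc : 0 ≤ c) (habc : a + b + c = 1) :
    ∫⁻ x, f x ^ a * g x ^ b * h x ^ c ∂μ
      ≤ (∫⁻ x, f x ∂μ) ^ a * (∫⁻ x, g x ∂μ) ^ b * (∫⁻ x, h x ∂μ) ^ c := by
  have := ENNReal.lintegral_prod_norm_pow_le (μ := μ) Finset.univ (f := ![f, g, h])
    (p := ![a, b, c]) (fun i _ => by fin_cases i <;> assumption)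
    (by simpa [Fin.sum_univ_three] using habc) (fun i _ => by fin_cases i <;> assumption)
  simpa [Fin.prod_univ_three, mul_assoc] using this

theorem mul_mul_eq_rpow_mul_rpow_mul_rpow {q r : ℝ} (hq1 : 1 < q) (hq2 : q ≤ 2)
    (hr : r = q / (q - 1) / 2) (a g b : ℝ≥0∞) :
    a * g * b = (a ^ q * g ^ r) ^ ((q - 1) / q) * (b ^ q * g ^ r) ^ ((q - 1) / q)
      * (a ^ q * b ^ q) ^ ((2 - q) / q) := by
  have hα : 0 ≤ (q - 1) / q := div_nonneg (by linarith) (by linarith)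
  have hγ : 0 ≤ (2 - q) / q := div_nonneg (by linarith) (by linarith)
  simp only [ENNReal.mul_rpow_of_nonneg _ _ hα, ENNReal.mul_rpow_of_nonneg _ _ hγ,
    ← ENNReal.rpow_mul]
  have hq : q * ((q - 1) / q) + q * ((2 - q) / q) = 1 := by field_simp; ring
  have hr' : r * ((q - 1) / q) + r * ((q - 1) / q) = 1 := by
    subst hr; field_simp [show q - 1 ≠ 0 by linarith]; ring
  have split (x : ℝ≥0∞) {s t : ℝ} (hs : 0 ≤ s) (ht : 0 ≤ t) (hst : s + t = 1) :
      x = x ^ s * x ^ t := by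
    rw [← ENNReal.rpow_add_of_nonneg _ _ hs ht, hst, ENNReal.rpow_one]
  have hr0 : 0 ≤ r := by
    rw [hr]; exact div_nonneg (div_nonneg (by linarith) (by linarith)) two_pos.le
  conv_lhs => rw [split a (by positivity) (by positivity) hq,
    split b (by positivity) (by positivity) hq, split g (by positivity) (by positivity) hr']
  ring

section Convolution

variable {E : Type*} [AddCommGroup E] [MeasurableSpace E] [MeasurableAdd₂ E] [MeasurableNeg E]
  {μ : Measure E} [SFinite μ] {F G : E → ℝ≥0∞}

theorem lintegral_prod_fst_mul_comp_sub [μ.IsAddLeftInvariant] [μ.IsNegInvariant]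
    (hF : AEMeasurable F μ) (hG : Measurable G) :
    ∫⁻ p, F p.1 * G (p.1 - p.2) ∂μ.prod μ = (∫⁻ x, F x ∂μ) * ∫⁻ v, G v ∂μ := by
  rw [lintegral_prod _ (by fun_prop)]
  have inner (x : E) : ∫⁻ y, F x * G (x - y) ∂μ = F x * ∫⁻ v, G v ∂μ := by
    rw [lintegral_const_mul _ (by fun_prop), lintegral_sub_left_eq_self]
  rw [lintegral_congr inner, lintegral_mul_const'' _ hF]

theorem lintegral_prod_snd_mul_comp_sub [μ.IsAddLeftInvariant] (hF : AEMeasurable F μ)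
    (hG : Measurable G) :
    ∫⁻ p, F p.2 * G (p.1 - p.2) ∂μ.prod μ = (∫⁻ x, F x ∂μ) * ∫⁻ v, G v ∂μ := by
  rw [lintegral_prod_symm _ (by fun_prop)]
  have inner (y : E) : ∫⁻ x, F y * G (x - y) ∂μ = F y * ∫⁻ v, G v ∂μ := by
    rw [lintegral_const_mul _ (by fun_prop), lintegral_sub_right_eq_self]
  rw [lintegral_congr inner, lintegral_mul_const'' _ hF]

theorem lintegral_prod_indicator_comp_sub_ne_zero_le (hF : AEMeasurable F μ) (hG : Measurable G)
    {L : ℝ≥0∞} (hloc : ∀ x, ∫⁻ y in {y | G (x - y) ≠ 0}, F y ∂μ ≤ L) :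
    ∫⁻ p, {p : E × E | G (p.1 - p.2) ≠ 0}.indicator (fun p => F p.1 * F p.2) p ∂μ.prod μ
      ≤ (∫⁻ x, F x ∂μ) * L := by
  set S := {p : E × E | G (p.1 - p.2) ≠ 0}
  have hS : MeasurableSet S := (hG.comp measurable_sub) (measurableSet_singleton 0).compl
  have hSx (x : E) : MeasurableSet {y | G (x - y) ≠ 0} :=
    (hG.comp (measurable_const.sub measurable_id)) (measurableSet_singleton 0).compl
  rw [lintegral_prod _
    ((by fun_prop : AEMeasurable (fun p : E × E => F p.1 * F p.2) _).indicator hS)]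
  calc ∫⁻ x, ∫⁻ y, S.indicator (fun p => F p.1 * F p.2) (x, y) ∂μ ∂μ
      = ∫⁻ x, F x * ∫⁻ y in {y | G (x - y) ≠ 0}, F y ∂μ ∂μ := by
        refine lintegral_congr fun x => ?_
        rw [← lintegral_const_mul'' _ hF.restrict, ← lintegral_indicator (hSx x)]
        rfl
    _ ≤ ∫⁻ x, F x * L ∂μ := lintegral_mono fun x => mul_le_mul_right (hloc x) _
    _ = (∫⁻ x, F x ∂μ) * L := lintegral_mul_const'' _ hF

theorem lintegral_lintegral_mul_comp_sub_mul_le [μ.IsAddLeftInvariant] [μ.IsNegInvariant]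
    (hF : AEMeasurable F μ) (hG : Measurable G) {q r : ℝ} (hq1 : 1 < q) (hq2 : q ≤ 2)
    (hr : r = q / (q - 1) / 2) {L : ℝ≥0∞}
    (hloc : ∀ x, ∫⁻ y in {y | G (x - y) ≠ 0}, F y ^ q ∂μ ≤ L) :
    ∫⁻ x, ∫⁻ y, F x * G (x - y) * F y ∂μ ∂μ
      ≤ (∫⁻ v, G v ^ r ∂μ) ^ (2 * (q - 1) / q) * L ^ ((2 - q) / q) * ∫⁻ x, F x ^ q ∂μ := by
  set α := (q - 1) / q
  set γ := (2 - q) / q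
  have hα : 0 < α := div_pos (by linarith) (by linarith)
  have hγ : 0 ≤ γ := div_nonneg (by linarith) (by linarith)
  have hsum : α + α + γ = 1 := by simp only [α, γ]; field_simp; ring
  have hr0 : 0 < r := by rw [hr]; exact div_pos (div_pos (by linarith) (by linarith)) two_pos
  set W := ∫⁻ x, F x ^ q ∂μ
  set 𝒦 := ∫⁻ v, G v ^ r ∂μ
  set S := {p : E × E | G (p.1 - p.2) ≠ 0}
  have hFq : AEMeasurable (fun x => F x ^ q) μ := hF.pow_const q
  have hGr : Measurable fun v => G v ^ r := hG.pow_const r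
  have split (p : E × E) : F p.1 * G (p.1 - p.2) * F p.2
      = (F p.1 ^ q * G (p.1 - p.2) ^ r) ^ α * (F p.2 ^ q * G (p.1 - p.2) ^ r) ^ α
        * S.indicator (fun p => F p.1 ^ q * F p.2 ^ q) p ^ γ := by
    by_cases hp : p ∈ S
    · rw [Set.indicator_of_mem hp]
      exact mul_mul_eq_rpow_mul_rpow_mul_rpow hq1 hq2 hr _ _ _
    · have hG0 : G (p.1 - p.2) = 0 := not_not.mp hp
      simp [hG0, hr0, hα]
  calc ∫⁻ x, ∫⁻ y, F x * G (x - y) * F y ∂μ ∂μ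
      = ∫⁻ p, F p.1 * G (p.1 - p.2) * F p.2 ∂μ.prod μ := by
        rw [lintegral_prod _ (by fun_prop)]
    _ = ∫⁻ p, (F p.1 ^ q * G (p.1 - p.2) ^ r) ^ α * (F p.2 ^ q * G (p.1 - p.2) ^ r) ^ α
          * S.indicator (fun p => F p.1 ^ q * F p.2 ^ q) p ^ γ ∂μ.prod μ := lintegral_congr split
    _ ≤ (∫⁻ p, F p.1 ^ q * G (p.1 - p.2) ^ r ∂μ.prod μ) ^ α
          * (∫⁻ p, F p.2 ^ q * G (p.1 - p.2) ^ r ∂μ.prod μ) ^ α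
          * (∫⁻ p, S.indicator (fun p => F p.1 ^ q * F p.2 ^ q) p ∂μ.prod μ) ^ γ :=
        lintegral_rpow_mul_rpow_mul_rpow_le (by fun_prop) (by fun_prop)
          (((by fun_prop : AEMeasurable (fun p : E × E => F p.1 ^ q * F p.2 ^ q) _)).indicator
            ((hG.comp measurable_sub) (measurableSet_singleton 0).compl))
          hα.le hα.le hγ hsum
    _ ≤ (W * 𝒦) ^ α * (W * 𝒦) ^ α * (W * L) ^ γ := by
        rw [lintegral_prod_fst_mul_comp_sub hFq hGr, lintegral_prod_snd_mul_comp_sub hFq hGr]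
        gcongr
        exact lintegral_prod_indicator_comp_sub_ne_zero_le hFq hG hloc
    _ = 𝒦 ^ (2 * (q - 1) / q) * L ^ γ * W ^ (α + α + γ) := by
        rw [ENNReal.mul_rpow_of_nonneg _ _ hα.le, ENNReal.mul_rpow_of_nonneg _ _ hγ,
          ENNReal.rpow_add_of_nonneg _ _ (by positivity) hγ,
          ENNReal.rpow_add_of_nonneg _ _ hα.le hα.le,
          show 2 * (q - 1) / q = α + α by simp only [α]; ring,
          ENNReal.rpow_add_of_nonneg _ _ hα.le hα.le]
        ring
    _ = 𝒦 ^ (2 * (q - 1) / q) * L ^ γ * W := by rw [hsum, ENNReal.rpow_one]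

end Convolution

theorem MemLp.lintegral_enorm_rpow_ne_top {α E : Type*} [MeasurableSpace α] {μ : Measure α}
    [NormedAddCommGroup E] {f : α → E} {r : ℝ} (hr : 0 < r)
    (hf : MemLp f (ENNReal.ofReal r) μ) :
    ∫⁻ x, ‖f x‖ₑ ^ r ∂μ ≠ ∞ := by
  simpa [ENNReal.toReal_ofReal hr.le] using (lintegral_rpow_enorm_lt_top_of_eLpNorm_lt_top
    (by simpa using hr) ENNReal.ofReal_ne_top hf.eLpNorm_lt_top).ne

theorem MemLp.integrable_norm_rpow_ofReal {α E : Type*} [MeasurableSpace α] {μ : Measure α}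
    [NormedAddCommGroup E] {f : α → E} {q : ℝ} (hq : 0 < q)
    (hf : MemLp f (ENNReal.ofReal q) μ) :
    Integrable (fun x => ‖f x‖ ^ q) μ := by
  simpa [ENNReal.toReal_ofReal hq.le] using
    hf.integrable_norm_rpow (by simpa using hq) ENNReal.ofReal_ne_top

theorem MemLp.withLp_toLp {α 𝕜 ι : Type*} [MeasurableSpace α] {μ : Measure α} [RCLike 𝕜]
    [Fintype ι] {p : ℝ≥0∞} {w : α → ι → 𝕜} (hw : MemLp w p μ) :
    MemLp (fun x => WithLp.toLp 2 (w x)) p μ :=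
  (EuclideanSpace.equiv ι 𝕜).symm.toContinuousLinearMap.comp_memLp' hw

theorem le_iSup_rpow_one_div_rpow {ι : Type*} {t : ι → ℝ} (ht : ∀ i, 0 ≤ t i) {B : ℝ}
    (hB : ∀ i, t i ≤ B) {q : ℝ} (hq : 0 < q) (i : ι) :
    t i ≤ (⨆ j, t j ^ (1 / q)) ^ q := by
  have hbdd : BddAbove (Set.range fun j => t j ^ (1 / q)) :=
    ⟨B ^ (1 / q), Set.forall_mem_range.mpr fun j =>
      Real.rpow_le_rpow (ht j) (hB j) (by positivity)⟩
  calc t i = (t i ^ (1 / q)) ^ q := by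
        rw [← Real.rpow_mul (ht i), one_div_mul_cancel hq.ne', Real.rpow_one]
    _ ≤ (⨆ j, t j ^ (1 / q)) ^ q :=
        Real.rpow_le_rpow (Real.rpow_nonneg (ht i) _) (le_ciSup hbdd i) hq.le

theorem ofReal_integral_norm_rpow {α E : Type*} [MeasurableSpace α] {μ : Measure α}
    [NormedAddCommGroup E] {f : α → E} {q : ℝ} (hq : 0 ≤ q)
    (hf : Integrable (fun x => ‖f x‖ ^ q) μ) :
    ENNReal.ofReal (∫ x, ‖f x‖ ^ q ∂μ) = ∫⁻ x, ‖f x‖ₑ ^ q ∂μ := by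
  rw [ofReal_integral_eq_lintegral_ofReal hf (ae_of_all _ fun x => by positivity)]
  simp only [← ENNReal.ofReal_rpow_of_nonneg (norm_nonneg _) hq, ofReal_norm]

theorem norm_le_toReal_mul_of_enorm_le {E : Type*} [NormedAddCommGroup E] {x : E} {A : ℝ≥0∞}
    (hA : A ≠ ∞) {t : ℝ} (ht : 0 ≤ t) (h : ‖x‖ₑ ≤ A * ENNReal.ofReal t) : ‖x‖ ≤ A.toReal * t := by
  simpa [ENNReal.toReal_ofReal ht] using ENNReal.toReal_mono (by finiteness) h

section Frobenius

attribute [local instance] Matrix.frobeniusSeminormedAddCommGroup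

theorem matNorm_eq_frobenius_norm {N : ℕ} (M : Matrix (Fin N) (Fin N) ℂ) :
    matNorm M = ‖M‖ := by
  simp only [matNorm, frobenius_norm_def, Real.rpow_two]

theorem norm_toLp_mulVec_le {N : ℕ} (M : Matrix (Fin N) (Fin N) ℂ) (v : Fin N → ℂ) :
    ‖WithLp.toLp 2 (M *ᵥ v)‖ ≤ ‖M‖ * ‖WithLp.toLp 2 v‖ := by
  simpa only [← frobenius_norm_replicateCol (ι := Unit), replicateCol_mulVec]
    using frobenius_norm_mul M (replicateCol Unit v)

theorem enorm_star_dotProduct_mulVec_le {N : ℕ} (M : Matrix (Fin N) (Fin N) ℂ)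
    (u v : Fin N → ℂ) :
    ‖star u ⬝ᵥ (M *ᵥ v)‖ₑ ≤ ‖WithLp.toLp 2 u‖ₑ * ‖matNorm M‖ₑ * ‖WithLp.toLp 2 v‖ₑ := by
  rw [← enorm_norm (WithLp.toLp 2 u), ← enorm_norm (WithLp.toLp 2 v), ← enorm_mul, ← enorm_mul,
    enorm_le_iff_norm_le, norm_mul, norm_mul, norm_norm, norm_norm,
    Real.norm_of_nonneg (by rw [matNorm_eq_frobenius_norm]; positivity), dotProduct_comm,
    ← EuclideanSpace.inner_toLp_toLp, matNorm_eq_frobenius_norm, mul_assoc]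
  exact (norm_inner_le_norm _ _).trans (by gcongr; exact norm_toLp_mulVec_le M v)

end Frobenius

theorem vecNormSq_rpow_half {N : ℕ} (v : Fin N → ℂ) (p : ℝ) :
    vecNormSq v ^ (p / 2) = ‖WithLp.toLp 2 v‖ ^ p := by
  rw [vecNormSq, ← EuclideanSpace.norm_sq_eq, ← Real.rpow_natCast,
    ← Real.rpow_mul (norm_nonneg _), Nat.cast_ofNat, mul_div_cancel₀ _ two_ne_zero]

theorem measurable_matNorm_comp {α : Type*} [MeasurableSpace α] {N : ℕ}
    {K : α → Matrix (Fin N) (Fin N) ℂ} (hK : ∀ i j, Measurable fun x => K x i j) :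
    Measurable fun x => matNorm (K x) := by
  unfold matNorm
  fun_prop

section UnitCubes

variable {d : ℕ}

def unitCube (z : Fin d → ℤ) : Set (EuclideanSpace ℝ (Fin d)) :=
  {x | ∀ i, (z i : ℝ) ≤ x i ∧ x i ≤ z i + 1}

theorem measurableSet_unitCube (z : Fin d → ℤ) : MeasurableSet (unitCube z) := by
  unfold unitCube
  measurability

noncomputable def cubesNear (x : EuclideanSpace ℝ (Fin d)) (R : ℝ) : Finset (Fin d → ℤ) :=
  Fintype.piFinset fun i => Finset.Icc (⌊x i⌋ - ⌈R⌉) (⌊x i⌋ + ⌈R⌉)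

theorem card_cubesNear (x : EuclideanSpace ℝ (Fin d)) (R : ℝ) :
    (cubesNear x R).card = (2 * ⌈R⌉ + 1).toNat ^ d := by
  simp only [cubesNear, Fintype.card_piFinset, Int.card_Icc,
    show ∀ a : ℤ, a + ⌈R⌉ + 1 - (a - ⌈R⌉) = 2 * ⌈R⌉ + 1 from fun a => by ring,
    Finset.prod_const, Finset.card_univ, Fintype.card_fin]

theorem closedBall_subset_biUnion_unitCube (x : EuclideanSpace ℝ (Fin d)) (R : ℝ) :
    Metric.closedBall x R ⊆ ⋃ z ∈ cubesNear x R, unitCube z := by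
  intro y hy
  have hyx (i : Fin d) : |y i - x i| ≤ R :=
    (PiLp.norm_apply_le (y - x) i).trans (by simpa [dist_eq_norm] using hy)
  refine Set.mem_biUnion (x := fun i => ⌊y i⌋) ?_
    fun i => ⟨Int.floor_le _, (Int.lt_floor_add_one _).le⟩
  refine Fintype.mem_piFinset.mpr fun i => Finset.mem_Icc.mpr ⟨Int.le_floor.mpr ?_, ?_⟩
  · push_cast
    linarith [abs_le.mp (hyx i), Int.floor_le (x i), Int.le_ceil R]
  · rw [← Int.floor_add_intCast]
    exact Int.floor_le_floor (by linarith [abs_le.mp (hyx i), Int.le_ceil R])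

theorem setLIntegral_closedBall_le_of_unitCube {f : EuclideanSpace ℝ (Fin d) → ℝ≥0∞} {L : ℝ≥0∞}
    (hL : ∀ z, ∫⁻ y in unitCube z, f y ≤ L) (x : EuclideanSpace ℝ (Fin d)) (R : ℝ) :
    ∫⁻ y in Metric.closedBall x R, f y ≤ (2 * ⌈R⌉ + 1).toNat ^ d * L := by
  calc ∫⁻ y in Metric.closedBall x R, f y
      ≤ ∫⁻ y in ⋃ z : cubesNear x R, unitCube z.1, f y := by
        rw [Set.iUnion_subtype]
        exact lintegral_mono_set (closedBall_subset_biUnion_unitCube x R)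
    _ ≤ ∑' z : cubesNear x R, ∫⁻ y in unitCube z.1, f y := lintegral_iUnion_le _ _
    _ = ∑ z ∈ cubesNear x R, ∫⁻ y in unitCube z, f y := by
        rw [tsum_fintype]
        exact Finset.sum_coe_sort (cubesNear x R) fun z => ∫⁻ y in unitCube z, f y
    _ ≤ (cubesNear x R).card * L := by
        simpa [nsmul_eq_mul] using Finset.sum_le_card_nsmul _ _ _ fun z _ => hL z
    _ = (2 * ⌈R⌉ + 1).toNat ^ d * L := by rw [card_cubesNear]; push_cast; rfl

end UnitCubes

theorem setLIntegral_closedBall_enorm_rpow_le {d : ℕ} {E : Type*} [NormedAddCommGroup E]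
    {g : EuclideanSpace ℝ (Fin d) → E} {q : ℝ} (hq : 0 < q)
    (hg : Integrable (fun x => ‖g x‖ ^ q)) (x : EuclideanSpace ℝ (Fin d)) (R : ℝ) :
    ∫⁻ y in Metric.closedBall x R, ‖g y‖ₑ ^ q
      ≤ (2 * ⌈R⌉ + 1).toNat ^ d
        * ENNReal.ofReal ((⨆ z, (∫ y in unitCube z, ‖g y‖ ^ q) ^ (1 / q)) ^ q) := by
  refine setLIntegral_closedBall_le_of_unitCube (fun z => ?_) x R
  rw [← ofReal_integral_norm_rpow hq.le hg.restrict]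
  exact ENNReal.ofReal_le_ofReal <| le_iSup_rpow_one_div_rpow
    (fun z => integral_nonneg fun y => by positivity)
    (fun z => setIntegral_le_integral hg (ae_of_all _ fun y => by positivity)) hq z

theorem enorm_integral_integral_star_dotProduct_mulVec_le {α : Type*} [MeasurableSpace α]
    [Sub α] (μ : Measure α) {N : ℕ} (K : α → Matrix (Fin N) (Fin N) ℂ) (w : α → Fin N → ℂ) :
    ‖∫ x, ∫ y, star (w x) ⬝ᵥ (K (x - y) *ᵥ w y) ∂μ ∂μ‖ₑ
      ≤ ∫⁻ x, ∫⁻ y, ‖WithLp.toLp 2 (w x)‖ₑ * ‖matNorm (K (x - y))‖ₑ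
          * ‖WithLp.toLp 2 (w y)‖ₑ ∂μ ∂μ :=
  (enorm_integral_le_lintegral_enorm _).trans <| lintegral_mono fun x =>
    (enorm_integral_le_lintegral_enorm _).trans <| lintegral_mono fun y =>
      enorm_star_dotProduct_mulVec_le (K (x - y)) (w x) (w y)

theorem setOf_enorm_matNorm_sub_ne_zero_subset_closedBall {E : Type*} [SeminormedAddCommGroup E]
    {N : ℕ} {K : E → Matrix (Fin N) (Fin N) ℂ} {R : ℝ} (hK : ∀ x, R < ‖x‖ → K x = 0) (x : E) :
    {y | ‖matNorm (K (x - y))‖ₑ ≠ 0} ⊆ Metric.closedBall x R := by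
  intro y hy
  by_contra hfar
  rw [Metric.mem_closedBall, not_le, dist_comm, dist_eq_norm] at hfar
  exact hy (by simp [hK _ hfar, matNorm])

theorem energy_no_vanishing_bound_general
    (d N : ℕ)
    (q r R : ℝ) (hq1 : 1 < q) (hq2 : q < 2) (hr : r = (q / (q - 1)) / 2)
    (K : EuclideanSpace ℝ (Fin d) → Matrix (Fin N) (Fin N) ℂ)
    (hKmeas : ∀ i j, Measurable fun x => K x i j)
    (hKr : MemLp (fun x => matNorm (K x)) (ENNReal.ofReal r) volume)
    (hKsupp : ∀ x : EuclideanSpace ℝ (Fin d), R < ‖x‖ → K x = 0) :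
    ∃ C : ℝ, 0 < C ∧
      ∀ w : EuclideanSpace ℝ (Fin d) → Fin N → ℂ,
        MemLp w (ENNReal.ofReal q) volume →
        ‖∫ x, ∫ y, dotProduct (star (w x)) ((K (x - y)) *ᵥ (w y))‖
          ≤ C * (⨆ z : Fin d → ℤ,
                (∫ x in {x : EuclideanSpace ℝ (Fin d) |
                    ∀ i, (z i : ℝ) ≤ x i ∧ x i ≤ z i + 1},
                  vecNormSq (w x) ^ (q / 2)) ^ (1 / q)) ^ (2 - q)
            * (∫ x, vecNormSq (w x) ^ (q / 2)) := by
  have hq0 : 0 < q := by linarith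
  have hγ : 0 ≤ (2 - q) / q := div_nonneg (by linarith) hq0.le
  have hr0 : 0 < r := by rw [hr]; exact div_pos (div_pos hq0 (by linarith)) two_pos
  set A := (∫⁻ v, ‖matNorm (K v)‖ₑ ^ r) ^ (2 * (q - 1) / q)
    * ((2 * ⌈R⌉ + 1).toNat ^ d : ℝ≥0∞) ^ ((2 - q) / q)
  have hA : A ≠ ∞ := ENNReal.mul_ne_top
    (ENNReal.rpow_ne_top_of_nonneg (by positivity) (MemLp.lintegral_enorm_rpow_ne_top hr0 hKr))
    (ENNReal.rpow_ne_top_of_nonneg hγ (by finiteness))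
  refine ⟨A.toReal + 1, by positivity, fun w hw => ?_⟩
  have hg := MemLp.withLp_toLp hw
  have hint := MemLp.integrable_norm_rpow_ofReal hq0 hg
  simp only [vecNormSq_rpow_half]
  set S := ⨆ z : Fin d → ℤ, (∫ x in unitCube z, ‖WithLp.toLp 2 (w x)‖ ^ q) ^ (1 / q)
  set W := ∫ x, ‖WithLp.toLp 2 (w x)‖ ^ q
  have hS : 0 ≤ S := Real.iSup_nonneg fun z => by positivity
  have hE : ‖∫ x, ∫ y, star (w x) ⬝ᵥ (K (x - y) *ᵥ w y)‖ₑ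
      ≤ A * ENNReal.ofReal (S ^ (2 - q) * W) := by
    refine (enorm_integral_integral_star_dotProduct_mulVec_le volume K w).trans <|
      (lintegral_lintegral_mul_comp_sub_mul_le hg.1.enorm (measurable_matNorm_comp hKmeas).enorm
        hq1 hq2.le hr fun x =>
          (lintegral_mono_set (setOf_enorm_matNorm_sub_ne_zero_subset_closedBall hKsupp x)).trans
            (setLIntegral_closedBall_enorm_rpow_le hq0 hint x R)).trans_eq ?_
    rw [← ofReal_integral_norm_rpow hq0.le hint, ENNReal.mul_rpow_of_nonneg _ _ hγ,
      ENNReal.ofReal_rpow_of_nonneg (by positivity) hγ, ← Real.rpow_mul hS,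
      mul_div_cancel₀ _ hq0.ne', ENNReal.ofReal_mul (by positivity)]
    ring
  calc _ ≤ A.toReal * (S ^ (2 - q) * W) := norm_le_toReal_mul_of_enorm_le hA (by positivity) hE
    _ ≤ (A.toReal + 1) * S ^ (2 - q) * W := by
        rw [mul_assoc]; gcongr; linarith

/-- **No-vanishing estimate.** For a compactly supported kernel `K ∈ L^r`,
the bilinear energy of `w` is controlled by
`C (sup_{z ∈ ℤ^d} ‖w‖_{L^q(C_z)})^{2−q} ‖w‖_q^q`, where `C_z = z + [0,1]^d`. -/
theorem energy_no_vanishing_bound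
    (d N : ℕ) (hd : 1 ≤ d) (hN : 1 ≤ N)
    (q r R : ℝ) (hq1 : 1 < q) (hq2 : q < 2) (hr : r = (q / (q - 1)) / 2)
    (hR : 0 < R)
    (K : EuclideanSpace ℝ (Fin d) → Matrix (Fin N) (Fin N) ℂ)
    (hKmeas : ∀ i j, Measurable fun x => K x i j)
    (hKr : MemLp (fun x => matNorm (K x)) (ENNReal.ofReal r) volume)
    (hKsupp : ∀ x : EuclideanSpace ℝ (Fin d), R < ‖x‖ → K x = 0) :
    ∃ C : ℝ, 0 < C ∧
      ∀ w : EuclideanSpace ℝ (Fin d) → Fin N → ℂ,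
        MemLp w (ENNReal.ofReal q) volume →
        ‖∫ x, ∫ y, dotProduct (star (w x)) ((K (x - y)) *ᵥ (w y))‖
          ≤ C * (⨆ z : Fin d → ℤ,
                (∫ x in {x : EuclideanSpace ℝ (Fin d) |
                    ∀ i, (z i : ℝ) ≤ x i ∧ x i ≤ z i + 1},
                  vecNormSq (w x) ^ (q / 2)) ^ (1 / q)) ^ (2 - q)
            * (∫ x, vecNormSq (w x) ^ (q / 2)) :=
  energy_no_vanishing_bound_general d N q r R hq1 hq2 hr K hKmeas hKr hKsupp
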